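/- arXiv:2511.21469 — 2 statements merged into one kernel-verified Lean document; each statement's English description precedes it below -/
import Mathlib

section
/- Let φ*(x,y,t) = min_{s ≥ 0} [(-x + b·s + c·t)²/(4(t + a·s)) + (y + s)²/(4t)] with a,b,c > 0, t > 0. Then for fixed r ≥ 0 and t > 0, the map θ ↦ φ*(r·cos θ, r·sin θ, t) is nondecreasing on [0, π/2]. -/
open Set Real

/-- The fundamental profile `φ*(x,y,t) = inf_{s ≥ 0} [(-x + bs + ct)²/(4(t+as)) + (y+s)²/(4t)]`. -/
noncomputable def phiStar (a b c x y t : ℝ) : ℝ :=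
  sInf ((fun s : ℝ =>
    (-x + b * s + c * t) ^ 2 / (4 * (t + a * s)) + (y + s) ^ 2 / (4 * t)) '' Ici 0)

/-- Pointwise comparison of the integrand under the rotation hypotheses. -/
lemma pointwise_le (a b c t s x₁ y₁ x₂ y₂ : ℝ) (ha : 0 < a) (ht : 0 < t) (hs : 0 ≤ s)
    (hA : 0 ≤ b * s + c * t) (hx2 : 0 ≤ x₂) (hx : x₂ ≤ x₁) (hy1 : 0 ≤ y₁) (hy : y₁ ≤ y₂)
    (hP : x₁ ^ 2 + y₁ ^ 2 = x₂ ^ 2 + y₂ ^ 2) :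
    (-x₁ + b * s + c * t) ^ 2 / (4 * (t + a * s)) + (y₁ + s) ^ 2 / (4 * t) ≤
      (-x₂ + b * s + c * t) ^ 2 / (4 * (t + a * s)) + (y₂ + s) ^ 2 / (4 * t) := by
  have hD : (0:ℝ) < 4 * (t + a * s) := by nlinarith
  have h4t : (0:ℝ) < 4 * t := by linarith
  rw [div_add_div _ _ (ne_of_gt hD) (ne_of_gt h4t), div_add_div _ _ (ne_of_gt hD) (ne_of_gt h4t),
    div_le_div_iff_of_pos_right (by positivity)]
  nlinarith [mul_nonneg (sub_nonneg.2 hx) (by linarith : (0:ℝ) ≤ x₁ + x₂),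
    mul_nonneg (mul_nonneg hs (sub_nonneg.2 hy)) (le_of_lt ht),
    mul_nonneg (mul_nonneg hA (sub_nonneg.2 hx)) (le_of_lt ht),
    mul_nonneg (mul_nonneg (mul_nonneg (le_of_lt ha) hs) (le_of_lt ht))
      (mul_nonneg (sub_nonneg.2 hx) (by linarith : (0:ℝ) ≤ x₁ + x₂)),
    mul_pos hD h4t, sq_nonneg (x₁ - x₂), sq_nonneg (y₂ - y₁)]

/-- For fixed r ≥ 0 and t > 0, the map
`θ ↦ φ*(r cos θ, r sin θ, t)` is nondecreasing on [0, π/2]. -/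
theorem stmt_12 (a b c t r : ℝ) (ha : 0 < a) (hb : 0 < b) (hc : 0 < c) (ht : 0 < t)
    (hr : 0 ≤ r) :
    MonotoneOn (fun θ : ℝ => phiStar a b c (r * Real.cos θ) (r * Real.sin θ) t)
      (Icc 0 (π / 2)) := by
  intro θ₁ h1 θ₂ h2 h12
  obtain ⟨h1l, h1r⟩ := h1
  obtain ⟨h2l, h2r⟩ := h2
  have hcos : Real.cos θ₂ ≤ Real.cos θ₁ :=
    Real.cos_le_cos_of_nonneg_of_le_pi h1l (by linarith [Real.pi_pos]) h12
  have hsin : Real.sin θ₁ ≤ Real.sin θ₂ :=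
    Real.sin_le_sin_of_le_of_le_pi_div_two (by linarith [Real.pi_pos]) h2r h12
  have hcos2 : 0 ≤ Real.cos θ₂ := Real.cos_nonneg_of_mem_Icc ⟨by linarith [Real.pi_pos], h2r⟩
  have hsin1 : 0 ≤ Real.sin θ₁ := Real.sin_nonneg_of_nonneg_of_le_pi h1l (by linarith [Real.pi_pos])
  simp only [phiStar]
  have hbdd : BddBelow ((fun s : ℝ =>
      (-(r * Real.cos θ₁) + b * s + c * t) ^ 2 / (4 * (t + a * s)) +
        (r * Real.sin θ₁ + s) ^ 2 / (4 * t)) '' Ici 0) := by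
    refine ⟨0, ?_⟩
    rintro v ⟨s, hs, rfl⟩
    have hD : (0:ℝ) < 4 * (t + a * s) := by
      have : (0:ℝ) ≤ a * s := mul_nonneg ha.le hs
      nlinarith
    positivity
  refine le_csInf ⟨_, mem_image_of_mem _ (self_mem_Ici (a := (0:ℝ)))⟩ ?_
  rintro v ⟨s, hs, rfl⟩
  refine le_trans (csInf_le hbdd (mem_image_of_mem _ hs)) ?_
  have h1 := Real.sin_sq_add_cos_sq θ₁
  have h2 := Real.sin_sq_add_cos_sq θ₂
  exact pointwise_le a b c t s _ _ _ _ ha ht hs (add_nonneg (mul_nonneg hb.le hs) (mul_pos hc ht).le)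
    (mul_nonneg hr hcos2) (mul_le_mul_of_nonneg_left hcos hr)
    (mul_nonneg hr hsin1) (mul_le_mul_of_nonneg_left hsin hr)
    (by nlinarith [h1, h2])
end

section
/- Let a,b,c > 0, t > 0, and consider a point (x, y) with y ≥ (a/(2t))(x − ct)² + b(x − ct), so that the minimizer of the profile function is s* = 0 and φ*(x,y,t) = ((x − ct)² + y²)/(4t). Define the straight path γ(τ) = (x(1 − τ/t), y(1 − τ/t)) for τ ∈ [0,t]. Then for every τ ∈ [0,t), the condition defining s* = 0 still holds at (γ(τ), t − τ), and φ*(γ(τ), t − τ) = ((t − τ)/t)·φ*(x,y,t). -/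
open Set

lemma phiStar_key (a b c t x y : ℝ) (ha : 0 < a) (ht : 0 < t) (hy : 0 ≤ y)
    (hreg : y ≥ a / (2 * t) * (x - c * t) ^ 2 + b * (x - c * t)) :
    phiStar a b c x y t = ((x - c * t) ^ 2 + y ^ 2) / (4 * t) := by
  have hreg' : 2 * t * y ≥ a * (x - c * t) ^ 2 + 2 * t * b * (x - c * t) := by
    have h := mul_le_mul_of_nonneg_left hreg (le_of_lt (by linarith : (0:ℝ) < 2 * t))
    have h2t : (2 * t) ≠ 0 := by positivity
    field_simp at h
    nlinarith [h]
  apply le_antisymm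
  · apply csInf_le
    · refine ⟨0, ?_⟩
      rintro z ⟨s, hs, rfl⟩
      have hs' : (0:ℝ) ≤ s := hs
      have hpos : 0 < t + a * s := by nlinarith
      positivity
    · refine ⟨0, mem_Ici.mpr le_rfl, ?_⟩
      simp only [mul_zero, add_zero, zero_add]
      ring_nf
  · apply le_csInf
    · exact ⟨_, ⟨0, mem_Ici.mpr le_rfl, rfl⟩⟩
    · rintro z ⟨s, hs, rfl⟩
      have hs' : (0:ℝ) ≤ s := hs
      have hpos : 0 < t + a * s := by nlinarith
      simp only
      rw [div_add_div _ _ (by positivity : (4 * (t + a * s)) ≠ 0) (by positivity : (4 * t) ≠ 0),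
        div_le_div_iff₀ (by positivity) (by positivity)]
      have hbr : 0 ≤ (2 * t * y - a * (x - c * t) ^ 2 - 2 * t * b * (x - c * t)) +
          t * b ^ 2 * s + 2 * a * s * y + t * s + a * s ^ 2 := by
        have h1 : 0 ≤ t * b ^ 2 * s := by positivity
        have h2 : 0 ≤ 2 * a * s * y := by positivity
        have h3 : 0 ≤ t * s := by positivity
        have h4 : 0 ≤ a * s ^ 2 := by positivity
        nlinarith [hreg']
      nlinarith [mul_nonneg (mul_nonneg (by positivity : (0:ℝ) ≤ 16 * t) hs') hbr]

/-- If `y ≥ (a/(2t))(x − ct)² + b(x − ct)` (so s* = 0 and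
`φ*(x,y,t) = ((x − ct)² + y²)/(4t)`), then along the straight path
`γ(τ) = (x(1 − τ/t), y(1 − τ/t))` the defining condition for s* = 0 persists at time t − τ,
and `φ*(γ(τ), t − τ) = ((t − τ)/t)·φ*(x,y,t)`. -/
theorem stmt_18 (a b c t x y : ℝ) (ha : 0 < a) (hb : 0 < b) (hc : 0 < c) (ht : 0 < t)
    (hy : 0 ≤ y) (hreg : y ≥ a / (2 * t) * (x - c * t) ^ 2 + b * (x - c * t)) :
    phiStar a b c x y t = ((x - c * t) ^ 2 + y ^ 2) / (4 * t) ∧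
    ∀ τ ∈ Ico (0 : ℝ) t,
      y * (1 - τ / t) ≥
        a / (2 * (t - τ)) * (x * (1 - τ / t) - c * (t - τ)) ^ 2 +
          b * (x * (1 - τ / t) - c * (t - τ)) ∧
      phiStar a b c (x * (1 - τ / t)) (y * (1 - τ / t)) (t - τ) =
        (t - τ) / t * phiStar a b c x y t := by
  refine ⟨phiStar_key a b c t x y ha ht hy hreg, ?_⟩
  rintro τ ⟨h0, hlt⟩
  have ht' : 0 < t - τ := by linarith
  have htne : t ≠ 0 := ne_of_gt ht
  have hfac : 1 - τ / t = (t - τ) / t := by field_simp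
  have h1 : x * (1 - τ / t) - c * (t - τ) = (t - τ) / t * (x - c * t) := by
    rw [hfac]; field_simp
  have h2 : a / (2 * (t - τ)) * ((t - τ) / t * (x - c * t)) ^ 2 +
      b * ((t - τ) / t * (x - c * t)) =
      (t - τ) / t * (a / (2 * t) * (x - c * t) ^ 2 + b * (x - c * t)) := by
    field_simp
  have hcond : y * (1 - τ / t) ≥
      a / (2 * (t - τ)) * (x * (1 - τ / t) - c * (t - τ)) ^ 2 +
        b * (x * (1 - τ / t) - c * (t - τ)) := by
    rw [h1, h2, hfac, mul_comm y]
    exact mul_le_mul_of_nonneg_left hreg (by positivity)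
  refine ⟨hcond, ?_⟩
  have hy' : 0 ≤ y * (1 - τ / t) := by
    rw [hfac]; positivity
  rw [phiStar_key a b c (t - τ) _ _ ha ht' hy' hcond,
    phiStar_key a b c t x y ha ht hy hreg, h1, hfac]
  field_simp
end
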